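/- Let 𝒱_m ⊆ 𝒱_{m+1} ⊆ ⋯ be a nested sequence of subspaces where 𝒱_{i+1} = 𝒱_i ⊕ span{v_{i+1}} with v_{i+1} a unit vector orthogonal to 𝒱_i, let x be a unit vector and x_{i,⊥} = (I - P_{V_i})x, assumed nonzero for i = 1,…,m+1. Then sin∠(𝒱_{m+1}, x) = sin∠(𝒱_1, x) · ∏_{i=2}^{m+1} sin∠(v_i, x_{i-1,⊥}). -/

import Mathlib

local notation "⟪" x ", " y "⟫" => @inner ℂ _ _ x y

/-!
Write `rᵢ = x - P_{𝒱ᵢ} x`. Since `vᵢ₊₁ ⟂ 𝒱ᵢ`, the projection onto `𝒱ᵢ ⊕ span{vᵢ₊₁}` is the sum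
of the two projections, so `rᵢ₊₁ = rᵢ - ⟪vᵢ₊₁, rᵢ⟫ vᵢ₊₁` and the `i`-th factor of the product is
`‖rᵢ₊₁‖ / ‖rᵢ‖`. The product telescopes; a vanishing `rᵢ` forces `rᵢ₊₁ = 0`, so the quotients
`0 / 0 = 0` do no harm.
-/

theorem Fin.apply_last_eq_mul_prod_div {G₀ : Type*} [CommGroupWithZero G₀] {m : ℕ}
    (a : Fin (m + 1) → G₀) (h : ∀ i : Fin m, a i.castSucc = 0 → a i.succ = 0) :
    a (Fin.last m) = a 0 * ∏ i : Fin m, a i.succ / a i.castSucc := by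
  induction m with
  | zero => simp
  | succ n ih =>
    have := ih (fun i => a i.castSucc) (fun i => h i.castSucc)
    simp only [Fin.castSucc_zero, ← Fin.succ_castSucc] at this
    rw [Fin.prod_univ_castSucc, ← mul_assoc, ← this]
    exact (mul_div_cancel_of_imp' (h (Fin.last n))).symm

namespace Submodule

variable {𝕜 E : Type*} [RCLike 𝕜] [NormedAddCommGroup E] [InnerProductSpace 𝕜 E]

theorem IsOrtho.starProjection_sup {U W : Submodule 𝕜 E} (h : U ⟂ W)
    [U.HasOrthogonalProjection] [W.HasOrthogonalProjection] [(U ⊔ W).HasOrthogonalProjection]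
    (x : E) : (U ⊔ W).starProjection x = U.starProjection x + W.starProjection x := by
  refine eq_starProjection_of_mem_orthogonal
    (add_mem_sup (U.starProjection_apply_mem x) (W.starProjection_apply_mem x)) ?_
  rw [← inf_orthogonal]
  constructor
  · rw [← sub_sub]
    exact sub_mem (U.sub_starProjection_mem_orthogonal x)
      (isOrtho_iff_le.1 h.symm (W.starProjection_apply_mem x))
  · rw [add_comm, ← sub_sub]
    exact sub_mem (W.sub_starProjection_mem_orthogonal x)
      (isOrtho_iff_le.1 h (U.starProjection_apply_mem x))

theorem sub_starProjection_sup_span_singleton (K : Submodule 𝕜 E) [K.HasOrthogonalProjection]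
    {v : E} [(K ⊔ 𝕜 ∙ v).HasOrthogonalProjection] (hv : ‖v‖ = 1) (hvK : v ∈ Kᗮ) (x : E) :
    x - (K ⊔ 𝕜 ∙ v).starProjection x
      = (x - K.starProjection x) - inner 𝕜 v (x - K.starProjection x) • v := by
  have hKv : K ⟂ 𝕜 ∙ v := IsOrtho.symm ((span_singleton_le_iff_mem v Kᗮ).2 hvK)
  rw [hKv.starProjection_sup, starProjection_unit_singleton 𝕜 hv, inner_sub_right,
    inner_left_of_mem_orthogonal (K.starProjection_apply_mem x) hvK, sub_zero, sub_add_eq_sub_sub]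

end Submodule

theorem sin_prod_formula_general {E : Type*} [NormedAddCommGroup E] [InnerProductSpace ℂ E]
    [FiniteDimensional ℂ E] (m : ℕ)
    (V : Fin (m + 1) → Submodule ℂ E) (v : Fin m → E)
    (hvnorm : ∀ i : Fin m, ‖v i‖ = 1)
    (hvperp : ∀ i : Fin m, v i ∈ (V i.castSucc)ᗮ)
    (hVsucc : ∀ i : Fin m, V i.succ = V i.castSucc ⊔ Submodule.span ℂ {v i})
    (x : E) :
    ‖x - (Submodule.orthogonalProjectionOnto (V (Fin.last m)) x : E)‖
      = ‖x - (Submodule.orthogonalProjectionOnto (V 0) x : E)‖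
        * ∏ i : Fin m,
            (‖(x - (Submodule.orthogonalProjectionOnto (V i.castSucc) x : E))
                - ⟪v i, x - (Submodule.orthogonalProjectionOnto (V i.castSucc) x : E)⟫ • v i‖
              / ‖x - (Submodule.orthogonalProjectionOnto (V i.castSucc) x : E)‖) := by
  obtain ⟨r, hr⟩ : ∃ r : Fin (m + 1) → E, ∀ i, r i = x - (V i).starProjection x := ⟨_, fun _ => rfl⟩
  have hstep (i : Fin m) : r i.succ = r i.castSucc - ⟪v i, r i.castSucc⟫ • v i := by
    simp only [hr, hVsucc i]
    exact (V i.castSucc).sub_starProjection_sup_span_singleton (hvnorm i) (hvperp i) x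
  simp only [← Submodule.starProjection_apply, ← hr, ← hstep]
  refine Fin.apply_last_eq_mul_prod_div (fun i => ‖r i‖) fun i hi => ?_
  rw [norm_eq_zero] at hi ⊢
  simp [hstep, hi]

/-- for a nested sequence of subspaces `𝒱_{i+1} = 𝒱_i ⊕ span{v_{i+1}}`
with each `v_{i+1}` a unit vector orthogonal to `𝒱_i`,
`sin∠(𝒱_{m+1}, x) = sin∠(𝒱_1, x) · ∏_{i=2}^{m+1} sin∠(v_i, x_{i-1,⊥})`,
where `x_{i,⊥} = (I - P_{V_i})x` and `sin∠(v, w) = ‖(I - vvᴴ)w‖/‖w‖`. -/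
theorem sin_prod_formula {E : Type*} [NormedAddCommGroup E] [InnerProductSpace ℂ E]
    [FiniteDimensional ℂ E] (m : ℕ)
    (V : Fin (m + 1) → Submodule ℂ E) (v : Fin m → E)
    (hvnorm : ∀ i : Fin m, ‖v i‖ = 1)
    (hvperp : ∀ i : Fin m, v i ∈ (V i.castSucc)ᗮ)
    (hVsucc : ∀ i : Fin m, V i.succ = V i.castSucc ⊔ Submodule.span ℂ {v i})
    (x : E) (hx : ‖x‖ = 1)
    (hxp : ∀ i : Fin (m + 1), x - (Submodule.orthogonalProjectionOnto (V i) x : E) ≠ 0) :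
    ‖x - (Submodule.orthogonalProjectionOnto (V (Fin.last m)) x : E)‖
      = ‖x - (Submodule.orthogonalProjectionOnto (V 0) x : E)‖
        * ∏ i : Fin m,
            (‖(x - (Submodule.orthogonalProjectionOnto (V i.castSucc) x : E))
                - ⟪v i, x - (Submodule.orthogonalProjectionOnto (V i.castSucc) x : E)⟫ • v i‖
              / ‖x - (Submodule.orthogonalProjectionOnto (V i.castSucc) x : E)‖) :=
  sin_prod_formula_general m V v hvnorm hvperp hVsucc x
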